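/- arXiv:1512.02449 — 2 statements merged into one kernel-verified Lean document; each statement's English description precedes it below -/
import Mathlib

section
/- Let K be a centered convex body of volume 1 in ℝⁿ and let q ≥ 1. Then for every θ in the unit sphere S^{n−1}, (2/e²)^{1/q} · (Γ(n)Γ(q+1)/Γ(n+q+1))^{1/q} · h_K(θ) ≤ h_{Z_q⁺(K)}(θ) ≤ 2^{1/q} · h_K(θ), where h_K(θ) = max_{x∈K} ⟨x,θ⟩ is the support function of K. -/
open MeasureTheory
open scoped ENNReal Pointwise RealInnerProductSpace

section Aux

open Set intervalIntegral

lemma betaNat (n : ℕ) : ∀ q : ℝ, 1 ≤ q →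
    ∫ s in (0:ℝ)..1, s ^ (q - 1) * (1 - s) ^ n
      = Real.Gamma q * Real.Gamma (n + 1) / Real.Gamma (q + n + 1) := by
  induction n with
  | zero =>
    intro q hq
    have hq0 : (0:ℝ) < q := by linarith
    have h1 : ∫ s in (0:ℝ)..1, s ^ (q - 1) * (1 - s) ^ (0:ℕ)
        = ∫ s in (0:ℝ)..1, s ^ (q - 1) := by
      refine integral_congr fun s _ => by simp
    rw [h1, integral_rpow (Or.inl (by linarith : (-1:ℝ) < q - 1))]
    have : q - 1 + 1 = q := by ring
    rw [this, Real.one_rpow, Real.zero_rpow (by linarith : q ≠ 0)]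
    simp only [Nat.cast_zero, zero_add, Real.Gamma_one]
    rw [show q + 0 + 1 = q + 1 by ring, Real.Gamma_add_one (by linarith : q ≠ 0)]
    have hΓ : Real.Gamma q ≠ 0 := (Real.Gamma_pos_of_pos hq0).ne'
    field_simp
    norm_num
  | succ n ih =>
    intro q hq
    have hq0 : (0:ℝ) < q := by linarith
    have hqne : q ≠ 0 := hq0.ne'
    set u : ℝ → ℝ := fun s => (1 - s) ^ (n + 1) with hu_def
    set v : ℝ → ℝ := fun s => s ^ q / q with hv_def
    set u' : ℝ → ℝ := fun s => ((n:ℝ) + 1) * (1 - s) ^ n * (-1) with hu'_def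
    set v' : ℝ → ℝ := fun s => s ^ (q - 1) with hv'_def
    have hu : ∀ x ∈ Set.uIcc (0:ℝ) 1, HasDerivAt u (u' x) x := by
      intro x _
      have h1 : HasDerivAt (fun s : ℝ => 1 - s) (-1) x := by
        simpa using (hasDerivAt_id x).const_sub 1
      simpa [hu'_def] using h1.fun_pow (n + 1)
    have hv : ∀ x ∈ Set.uIcc (0:ℝ) 1, HasDerivAt v (v' x) x := by
      intro x _
      have h1 : HasDerivAt (fun s : ℝ => s ^ q) (q * x ^ (q - 1)) x :=
        Real.hasDerivAt_rpow_const (Or.inr hq)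
      have := h1.div_const q
      simpa [hv'_def, mul_div_assoc, mul_div_cancel_left₀ _ hqne] using this
    have hu'i : IntervalIntegrable u' volume 0 1 := by
      apply Continuous.intervalIntegrable
      continuity
    have hv'i : IntervalIntegrable v' volume 0 1 :=
      intervalIntegrable_rpow (Or.inl (by linarith))
    have key := integral_mul_deriv_eq_deriv_mul hu hv hu'i hv'i
    have hlhs : ∫ s in (0:ℝ)..1, s ^ (q - 1) * (1 - s) ^ (n+1)
        = ∫ s in (0:ℝ)..1, u s * v' s := by
      refine integral_congr fun s _ => by simp [hu_def, hv'_def, mul_comm]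
    have hval : u 1 * v 1 - u 0 * v 0 = 0 := by
      simp [hu_def, hv_def, Real.zero_rpow hqne]
    have hrhs : ∫ s in (0:ℝ)..1, u' s * v s
        = (-((n:ℝ)+1)/q) * ∫ s in (0:ℝ)..1, s ^ (q + 1 - 1) * (1 - s) ^ n := by
      rw [← intervalIntegral.integral_const_mul]
      refine integral_congr fun s _ => ?_
      have : q + 1 - 1 = q := by ring
      rw [this]
      simp only [hu'_def, hv_def]
      field_simp
    have ih' := ih (q + 1) (by linarith)
    rw [hlhs, key, hval, hrhs, ih']
    have hΓq : Real.Gamma (q + 1) = q * Real.Gamma q := Real.Gamma_add_one hqne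
    have hΓn : Real.Gamma ((n:ℝ) + 1 + 1) = ((n:ℝ) + 1) * Real.Gamma ((n:ℝ) + 1) :=
      Real.Gamma_add_one (by positivity)
    have harg : q + 1 + (n:ℝ) + 1 = q + ((n:ℕ) + 1 : ℕ) + 1 := by push_cast; ring
    have hΓpos : (0:ℝ) < Real.Gamma (q + ((n:ℕ)+1:ℕ) + 1) := Real.Gamma_pos_of_pos (by positivity)
    rw [harg]
    push_cast
    rw [hΓq, hΓn]
    field_simp
    ring

lemma cone_tail {n : ℕ} {K : Set (EuclideanSpace ℝ (Fin n))} (hK_conv : Convex ℝ K)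
    {θ x₀ : EuclideanSpace ℝ (Fin n)} (hx₀ : x₀ ∈ K) {h δ t : ℝ}
    (hh : ⟪x₀, θ⟫ = h) (hδ : 0 ≤ δ) (ht : 0 < t) (hth : t < h) :
    ENNReal.ofReal (((h - t) / (h + δ)) ^ n) * volume (K ∩ {x | -δ ≤ ⟪x, θ⟫})
      ≤ volume (K ∩ {x | t ≤ ⟪x, θ⟫}) := by
  have hhδ : (0:ℝ) < h + δ := by linarith
  set l : ℝ := (t + δ) / (h + δ) with hl_def
  have hl0 : 0 < l := by positivity
  have hl1 : l < 1 := by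
    rw [hl_def, div_lt_one hhδ]; linarith
  have hc : 1 - l = (h - t) / (h + δ) := by
    rw [hl_def]; field_simp; ring
  set A : Set (EuclideanSpace ℝ (Fin n)) := K ∩ {x | -δ ≤ ⟪x, θ⟫} with hA_def
  have hsub : (l • x₀) +ᵥ ((1 - l) • A) ⊆ K ∩ {x | t ≤ ⟪x, θ⟫} := by
    rintro y ⟨z, ⟨a, ha, rfl⟩, rfl⟩
    constructor
    · have := hK_conv ha.1 hx₀ (by linarith : (0:ℝ) ≤ 1 - l) hl0.le (by ring)
      simpa [add_comm] using this
    · have haθ : -δ ≤ ⟪a, θ⟫ := ha.2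
      have : ⟪l • x₀ +ᵥ (1 - l) • a, θ⟫ = l * h + (1 - l) * ⟪a, θ⟫ := by
        rw [vadd_eq_add, inner_add_left, real_inner_smul_left, real_inner_smul_left, hh]
      rw [Set.mem_setOf_eq, this]
      have h1 : l * h + (1 - l) * ⟪a, θ⟫ ≥ l * h + (1 - l) * (-δ) := by nlinarith
      have h2 : l * h + (1 - l) * (-δ) = l * (h + δ) - δ := by ring
      have h3 : l * (h + δ) = t + δ := by rw [hl_def]; field_simp
      linarith
  calc ENNReal.ofReal (((h - t) / (h + δ)) ^ n) * volume A
      = volume ((l • x₀) +ᵥ ((1 - l) • A)) := by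
        rw [measure_vadd, Measure.addHaar_smul_of_nonneg volume (by linarith : (0:ℝ) ≤ 1 - l) A,
          finrank_euclideanSpace_fin, hc]
    _ ≤ volume (K ∩ {x | t ≤ ⟪x, θ⟫}) := measure_mono hsub

lemma lower_cone {n : ℕ} {K : Set (EuclideanSpace ℝ (Fin n))} (hK_comp : IsCompact K)
    (hK_conv : Convex ℝ K) (hK_vol : volume K = 1)
    {θ x₀ : EuclideanSpace ℝ (Fin n)} (hx₀ : x₀ ∈ K) {h δ q : ℝ}
    (hh : ⟪x₀, θ⟫ = h) (hhpos : 0 < h)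
    (hδ : 0 ≤ δ) (hq : 1 ≤ q) :
    (volume (K ∩ {x | -δ ≤ ⟪x, θ⟫})).toReal * ((h / (h + δ)) ^ n *
      (Real.Gamma (q + 1) * Real.Gamma (n + 1) / Real.Gamma (q + n + 1)) * h ^ q)
      ≤ ∫ x in K, max ⟪x, θ⟫ 0 ^ q := by
  have hq0 : (0 : ℝ) < q := by linarith
  have hqne : q ≠ 0 := hq0.ne'
  have hKm : MeasurableSet K := hK_comp.isClosed.measurableSet
  have hhδ : (0:ℝ) < h + δ := by linarith
  set g : EuclideanSpace ℝ (Fin n) → ℝ := fun x => max ⟪x, θ⟫ 0 with hg_def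
  have hinner_cont : Continuous fun x : EuclideanSpace ℝ (Fin n) => ⟪x, θ⟫ :=
    continuous_id.inner continuous_const
  have hg_cont : Continuous g := hinner_cont.max continuous_const
  have hg_nn : ∀ x, 0 ≤ g x := fun x => le_max_right _ _
  have hgq_cont : Continuous fun x => g x ^ q :=
    hg_cont.rpow_const fun x => Or.inr hq0.le
  have intq : IntegrableOn (fun x => g x ^ q) K volume :=
    hgq_cont.continuousOn.integrableOn_compact hK_comp
  set cE : ℝ≥0∞ := volume (K ∩ {x | -δ ≤ ⟪x, θ⟫}) with hcE_def
  have hcE_le : cE ≤ 1 := by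
    rw [← hK_vol]; exact measure_mono inter_subset_left
  have hcE_ne : cE ≠ ∞ := (lt_of_le_of_lt hcE_le (by norm_num)).ne
  set cR : ℝ := cE.toReal with hcR_def
  have hcE_eq : cE = ENNReal.ofReal cR := (ENNReal.ofReal_toReal hcE_ne).symm
  have hcR_nn : 0 ≤ cR := ENNReal.toReal_nonneg
  set L : ℝ≥0∞ := ∫⁻ x in K, ENNReal.ofReal (g x ^ q) ∂volume with hL_def
  have hL_ne : L ≠ ∞ := intq.lintegral_lt_top.ne
  have hInt : ∫ x in K, g x ^ q = L.toReal :=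
    integral_eq_lintegral_of_nonneg_ae (ae_of_all _ fun x => by positivity)
      intq.aestronglyMeasurable
  -- layer cake
  set w : ℝ → ℝ := fun t => q * t ^ (q - 1) with hw_def
  have hw_int : ∀ t > (0:ℝ), IntervalIntegrable w volume 0 t := fun t ht =>
    (intervalIntegrable_rpow (Or.inl (by linarith))).const_mul q
  have hw_nn : ∀ᵐ t ∂(volume.restrict (Ioi (0:ℝ))), 0 ≤ w t := by
    filter_upwards [self_mem_ae_restrict measurableSet_Ioi] with t ht
    have : (0:ℝ) ≤ t := le_of_lt ht
    positivity
  have key := lintegral_comp_eq_lintegral_meas_le_mul (volume.restrict K)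
    (ae_of_all _ hg_nn) hg_cont.measurable.aemeasurable hw_int hw_nn
  have hprim : ∀ b : ℝ, 0 ≤ b → ∫ s in (0:ℝ)..b, w s = b ^ q := by
    intro b hb
    rw [hw_def]
    rw [intervalIntegral.integral_const_mul, integral_rpow (Or.inl (by linarith : (-1:ℝ) < q - 1))]
    rw [show q - 1 + 1 = q by ring, Real.zero_rpow hqne]
    field_simp
    ring
  have hLkey : L = ∫⁻ t in Ioi (0:ℝ), (volume.restrict K) {a | t ≤ g a} * ENNReal.ofReal (w t) := by
    rw [hL_def, ← key]
    exact lintegral_congr fun x => by rw [hprim (g x) (hg_nn x)]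
  -- lower bound the tail integral
  set c1 : ℝ → ℝ := fun t => ((h - t) / (h + δ)) ^ n with hc1_def
  have hc1_cont : Continuous c1 := (((continuous_const.sub continuous_id).div_const _).pow n)
  have hwc_cont : Continuous fun t => c1 t * w t := by
    apply hc1_cont.mul
    exact continuous_const.mul (continuous_id.rpow_const fun x => Or.inr (by linarith))
  have hstep1 : (∫⁻ t in Ioo (0:ℝ) h, cE * ENNReal.ofReal (c1 t * w t))
      ≤ ∫⁻ t in Ioi (0:ℝ), (volume.restrict K) {a | t ≤ g a} * ENNReal.ofReal (w t) := by
    refine le_trans ?_ (lintegral_mono_set (Ioo_subset_Ioi_self : Ioo (0:ℝ) h ⊆ Ioi 0))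
    refine setLIntegral_mono' measurableSet_Ioo fun t ht => ?_
    have htpos : 0 < t := ht.1
    have hth : t < h := ht.2
    have hwt_nn : 0 ≤ w t := by
      have : (0:ℝ) ≤ t := htpos.le
      positivity
    have hc1t_nn : 0 ≤ c1 t := by
      apply pow_nonneg; apply div_nonneg <;> linarith
    have hmeas : (volume.restrict K) {a | t ≤ g a} = volume (K ∩ {x | t ≤ ⟪x, θ⟫}) := by
      rw [Measure.restrict_apply (measurableSet_le measurable_const hg_cont.measurable)]
      congr 1
      ext x
      simp only [mem_inter_iff, mem_setOf_eq]
      rw [hg_def]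
      constructor
      · rintro ⟨h1, h2⟩; exact ⟨h2, by rcases le_max_iff.mp h1 with h' | h'; exact h'; linarith⟩
      · rintro ⟨h1, h2⟩; exact ⟨le_max_iff.mpr (Or.inl h2), h1⟩
    rw [ENNReal.ofReal_mul hc1t_nn, hmeas]
    rw [show cE * (ENNReal.ofReal (c1 t) * ENNReal.ofReal (w t))
        = (ENNReal.ofReal (c1 t) * cE) * ENNReal.ofReal (w t) by ring]
    exact mul_le_mul_left (cone_tail hK_conv hx₀ hh hδ htpos hth) _
  -- compute the explicit integral
  have hbeta := betaNat n q hq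
  have hR : ∫ t in Ioo (0:ℝ) h, c1 t * w t
      = (h / (h + δ)) ^ n *
        (Real.Gamma (q + 1) * Real.Gamma (n + 1) / Real.Gamma (q + n + 1)) * h ^ q := by
    rw [← integral_Ioc_eq_integral_Ioo, ← intervalIntegral.integral_of_le hhpos.le]
    have hsub : ∫ t in (0:ℝ)..h, c1 t * w t
        = h • ∫ s in (0:ℝ)..1, c1 (h * s) * w (h * s) := by
      rw [intervalIntegral.smul_integral_comp_mul_left (fun t => c1 t * w t) h]
      norm_num
    rw [hsub]
    have hcongr : ∫ s in (0:ℝ)..1, c1 (h * s) * w (h * s)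
        = ∫ s in (0:ℝ)..1, ((h / (h + δ)) ^ n * (q * h ^ (q - 1)))
            * (s ^ (q - 1) * (1 - s) ^ n) := by
      refine integral_congr fun s hs => ?_
      rw [Set.uIcc_of_le zero_le_one] at hs
      have hs0 : 0 ≤ s := hs.1
      have h1 : c1 (h * s) = (h / (h + δ)) ^ n * (1 - s) ^ n := by
        simp only [hc1_def]
        rw [show h - h * s = h * (1 - s) by ring, show h * (1 - s) / (h + δ) = h / (h + δ) * (1 - s) by ring]
        rw [mul_pow]
      have h2 : w (h * s) = q * (h ^ (q - 1) * s ^ (q - 1)) := by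
        simp only [hw_def]
        rw [Real.mul_rpow hhpos.le hs0]
      rw [h1, h2]; ring
    rw [hcongr, intervalIntegral.integral_const_mul, hbeta]
    have hΓq : Real.Gamma (q + 1) = q * Real.Gamma q := Real.Gamma_add_one hqne
    have hhq : h * h ^ (q - 1) = h ^ q := by
      have : h ^ q = h ^ (1 + (q - 1)) := by norm_num
      rw [this, Real.rpow_add hhpos, Real.rpow_one]
    rw [smul_eq_mul, hΓq, ← hhq]
    ring
  -- integrability of the explicit integrand
  have hint_c1w : IntegrableOn (fun t => c1 t * w t) (Ioo (0:ℝ) h) volume :=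
    (hwc_cont.integrableOn_Icc).mono_set Ioo_subset_Icc_self
  have hnn_c1w : 0 ≤ᵐ[volume.restrict (Ioo (0:ℝ) h)] fun t => c1 t * w t := by
    filter_upwards [self_mem_ae_restrict measurableSet_Ioo] with t ht
    have h1 : 0 ≤ c1 t := by
      apply pow_nonneg; apply div_nonneg <;> [linarith [ht.2]; linarith]
    have h2 : 0 ≤ w t := by
      have : (0:ℝ) ≤ t := ht.1.le
      positivity
    exact mul_nonneg h1 h2
  have hstep2 : (∫⁻ t in Ioo (0:ℝ) h, cE * ENNReal.ofReal (c1 t * w t))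
      = cE * ENNReal.ofReal (∫ t in Ioo (0:ℝ) h, c1 t * w t) := by
    rw [lintegral_const_mul' cE _ hcE_ne, ofReal_integral_eq_lintegral_ofReal hint_c1w hnn_c1w]
  -- final conclusion
  have hfinal : ENNReal.ofReal (cR * ((h / (h + δ)) ^ n *
      (Real.Gamma (q + 1) * Real.Gamma (n + 1) / Real.Gamma (q + n + 1)) * h ^ q)) ≤ L := by
    rw [ENNReal.ofReal_mul hcR_nn, ← hcE_eq, ← hR, ← hstep2, hLkey]
    exact hstep1
  rw [hInt]
  exact (ENNReal.ofReal_le_iff_le_toReal hL_ne).mp hfinal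

end Aux

/-- Support function of the one-sided L_q-centroid body Z_q⁺(K). -/
noncomputable def hZplus {n : ℕ} (K : Set (EuclideanSpace ℝ (Fin n))) (q : ℝ)
    (y : EuclideanSpace ℝ (Fin n)) : ℝ :=
  (2 * ∫ x in K, max ⟪x, y⟫ 0 ^ q) ^ (1 / q)

/-- Support function of K: h_K(θ) = sup_{x ∈ K} ⟨x, θ⟩. -/
noncomputable def suppFn {n : ℕ} (K : Set (EuclideanSpace ℝ (Fin n)))
    (θ : EuclideanSpace ℝ (Fin n)) : ℝ :=
  sSup ((fun x => ⟪x, θ⟫) '' K)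

section Main

open Set

set_option maxHeartbeats 2000000 in
/-- For a centered convex body K of volume 1 in ℝⁿ, q ≥ 1 and θ ∈ S^{n−1},
(2/e²)^{1/q} (Γ(n)Γ(q+1)/Γ(n+q+1))^{1/q} h_K(θ) ≤ h_{Z_q⁺(K)}(θ) ≤ 2^{1/q} h_K(θ). -/
theorem statement3 (n : ℕ) (K : Set (EuclideanSpace ℝ (Fin n)))
    (hK_comp : IsCompact K) (hK_conv : Convex ℝ K) (hK_int : (interior K).Nonempty)
    (hK_vol : volume K = 1) (hK_cen : (∫ x in K, x) = 0)
    (q : ℝ) (hq : 1 ≤ q) (θ : EuclideanSpace ℝ (Fin n)) (hθ : ‖θ‖ = 1) :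
    (2 / Real.exp 1 ^ 2) ^ (1 / q) *
        (Real.Gamma n * Real.Gamma (q + 1) / Real.Gamma (n + q + 1)) ^ (1 / q) *
        suppFn K θ ≤ hZplus K q θ ∧
      hZplus K q θ ≤ (2 : ℝ) ^ (1 / q) * suppFn K θ := by
  have hq0 : (0:ℝ) < q := by linarith
  have hqne : q ≠ 0 := hq0.ne'
  -- n ≥ 1
  have hn : 1 ≤ n := by
    by_contra hn'
    have hn0 : n = 0 := by omega
    subst hn0
    have : θ = 0 := by
      ext i; exact i.elim0
    rw [this] at hθ; simp at hθ
  have hnR : (1:ℝ) ≤ (n:ℝ) := by exact_mod_cast hn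
  have hnne : ((n:ℝ)) ≠ 0 := by positivity
  have hKm : MeasurableSet K := hK_comp.isClosed.measurableSet
  have hK_ne : K.Nonempty := hK_int.mono interior_subset
  haveI : IsProbabilityMeasure (volume.restrict K) :=
    ⟨by rw [Measure.restrict_apply_univ, hK_vol]⟩
  -- the barycenter belongs to K
  have hid_int : IntegrableOn (fun x : EuclideanSpace ℝ (Fin n) => x) K volume :=
    continuousOn_id.integrableOn_compact hK_comp
  have h0K : (0 : EuclideanSpace ℝ (Fin n)) ∈ K := by
    have := hK_conv.integral_mem hK_comp.isClosed
      ((ae_restrict_mem hKm) : ∀ᵐ x ∂volume.restrict K, x ∈ K) hid_int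
    rwa [hK_cen] at this
  -- support function basics
  have hinner_cont : Continuous fun x : EuclideanSpace ℝ (Fin n) => ⟪x, θ⟫ :=
    continuous_id.inner continuous_const
  set h := suppFn K θ with hh_def
  have himg_cpt : IsCompact ((fun x => ⟪x, θ⟫) '' K) := hK_comp.image hinner_cont
  have himg_ne : ((fun x => ⟪x, θ⟫) '' K).Nonempty := hK_ne.image _
  have hsupp : h = sSup ((fun x => ⟪x, θ⟫) '' K) := rfl
  obtain ⟨x₀, hx₀K, hx₀⟩ : ∃ x₀ ∈ K, ⟪x₀, θ⟫ = h := by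
    have h2 := himg_cpt.sSup_mem himg_ne
    rw [← hsupp] at h2
    obtain ⟨x₀, hx₀K, hx₀⟩ := h2
    exact ⟨x₀, hx₀K, hx₀⟩
  have hbd : ∀ x ∈ K, ⟪x, θ⟫ ≤ h := by
    intro x hx
    rw [hsupp]
    exact le_csSup himg_cpt.bddAbove (mem_image_of_mem _ hx)
  have hh0 : 0 ≤ h := by
    have := hbd 0 h0K
    simpa using this
  -- integrand basics
  set g : EuclideanSpace ℝ (Fin n) → ℝ := fun x => max ⟪x, θ⟫ 0 with hg_def
  have hg_cont : Continuous g := hinner_cont.max continuous_const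
  have hg_nn : ∀ x, 0 ≤ g x := fun x => le_max_right _ _
  have hgq_cont : Continuous fun x => g x ^ q := hg_cont.rpow_const fun x => Or.inr hq0.le
  have intq : IntegrableOn (fun x => g x ^ q) K volume :=
    hgq_cont.continuousOn.integrableOn_compact hK_comp
  set I : ℝ := ∫ x in K, g x ^ q with hI_def
  have hI_nn : 0 ≤ I := setIntegral_nonneg hKm fun x _ => by positivity
  -- upper bound
  have hIle : I ≤ h ^ q := by
    have h1 : I ≤ ∫ _x in K, h ^ q :=
      setIntegral_mono_on intq (integrable_const _) hKm fun x hx =>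
        Real.rpow_le_rpow (hg_nn x) (max_le (hbd x hx) hh0) hq0.le
    have h2 : ∫ _x in K, h ^ q ∂volume = h ^ q := by
      rw [setIntegral_const, Measure.real, hK_vol]; simp
    linarith
  have hupper : hZplus K q θ ≤ (2:ℝ) ^ (1/q) * h := by
    show (2 * I) ^ (1/q) ≤ (2:ℝ) ^ (1/q) * h
    calc (2 * I) ^ (1/q) ≤ (2 * h ^ q) ^ (1/q) :=
          Real.rpow_le_rpow (by positivity) (by linarith) (by positivity)
      _ = (2:ℝ) ^ (1/q) * h := by
          rw [Real.mul_rpow (by norm_num) (Real.rpow_nonneg hh0 q),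
            ← Real.rpow_mul hh0, mul_one_div_cancel hqne, Real.rpow_one]
  refine ⟨?_, hupper⟩
  -- lower bound
  rcases eq_or_lt_of_le hh0 with hh_eq | hhpos
  · rw [← hh_eq, mul_zero]
    show (0:ℝ) ≤ (2 * I) ^ (1/q)
    positivity
  -- positivity of Gamma factors
  have hΓn_pos : 0 < Real.Gamma n := Real.Gamma_pos_of_pos (by positivity)
  have hΓq_pos : 0 < Real.Gamma (q+1) := Real.Gamma_pos_of_pos (by positivity)
  have hΓD_pos : 0 < Real.Gamma ((n:ℝ) + q + 1) := Real.Gamma_pos_of_pos (by positivity)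
  have hΓn1 : Real.Gamma ((n:ℝ) + 1) = (n:ℝ) * Real.Gamma n := Real.Gamma_add_one hnne
  set e2 : ℝ := Real.exp 1 ^ 2 with he2_def
  have he2_pos : 0 < e2 := by positivity
  have he2_gt : (7:ℝ) < e2 := by
    have := Real.exp_one_gt_d9
    rw [he2_def]; nlinarith
  -- the master reduction using lower_cone
  have reduce : ∀ d : ℝ, 0 ≤ d →
      1 / e2 ≤ (volume (K ∩ {x | -d ≤ ⟪x, θ⟫})).toReal * (h / (h + d)) ^ n * n →
      (1 / e2) * (Real.Gamma n * Real.Gamma (q + 1) / Real.Gamma ((n:ℝ) + q + 1)) * h ^ q ≤ I := by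
    intro d hd hfact
    have hlc := lower_cone hK_comp hK_conv hK_vol hx₀K hx₀ hhpos hd hq
    rw [← hI_def] at hlc
    set cR : ℝ := (volume (K ∩ {x | -d ≤ ⟪x, θ⟫})).toReal with hcR_def
    have hcR_nn : 0 ≤ cR := ENNReal.toReal_nonneg
    have hpow_nn : (0:ℝ) ≤ (h / (h + d)) ^ n := by positivity
    have hargs : q + (n:ℝ) + 1 = (n:ℝ) + q + 1 := by ring
    rw [hargs, hΓn1] at hlc
    have hhq_pos : (0:ℝ) < h ^ q := Real.rpow_pos_of_pos hhpos q
    have hfac_pos : (0:ℝ) < Real.Gamma n * Real.Gamma (q+1) / Real.Gamma ((n:ℝ)+q+1) * h ^ q := by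
      positivity
    have key : (1 / e2) * (Real.Gamma n * Real.Gamma (q + 1) / Real.Gamma ((n:ℝ) + q + 1) * h ^ q)
        ≤ (cR * (h / (h + d)) ^ n * n) *
          (Real.Gamma n * Real.Gamma (q + 1) / Real.Gamma ((n:ℝ) + q + 1) * h ^ q) :=
      mul_le_mul_of_nonneg_right hfact hfac_pos.le
    calc (1 / e2) * (Real.Gamma n * Real.Gamma (q + 1) / Real.Gamma ((n:ℝ) + q + 1)) * h ^ q
        = (1 / e2) * (Real.Gamma n * Real.Gamma (q + 1) / Real.Gamma ((n:ℝ) + q + 1) * h ^ q) := by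
          ring
      _ ≤ (cR * (h / (h + d)) ^ n * n) *
          (Real.Gamma n * Real.Gamma (q + 1) / Real.Gamma ((n:ℝ) + q + 1) * h ^ q) := key
      _ = cR * ((h / (h + d)) ^ n *
          (Real.Gamma (q + 1) * ((n:ℝ) * Real.Gamma n) / Real.Gamma ((n:ℝ) + q + 1)) * h ^ q) := by
          ring
      _ ≤ I := hlc
  -- case split on the halfspace volume
  set S0 : Set (EuclideanSpace ℝ (Fin n)) := K ∩ {x | 0 < ⟪x, θ⟫} with hS0_def
  set c0 : ℝ := (volume S0).toReal with hc0_def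
  have hS0m : MeasurableSet {x : EuclideanSpace ℝ (Fin n) | 0 < ⟪x, θ⟫} :=
    measurableSet_lt measurable_const hinner_cont.measurable
  have hvol_fin : ∀ S : Set (EuclideanSpace ℝ (Fin n)), S ⊆ K → volume S ≠ ∞ := by
    intro S hS
    have : volume S ≤ 1 := by rw [← hK_vol]; exact measure_mono hS
    exact (lt_of_le_of_lt this (by norm_num)).ne
  have hkey : (1 / e2) * (Real.Gamma n * Real.Gamma (q + 1) / Real.Gamma ((n:ℝ) + q + 1)) * h ^ q ≤ I := by
    rcases le_or_gt (1 / (e2 * n)) c0 with hcase | hcase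
    · -- Case A : big halfspace, δ = 0
      refine reduce 0 le_rfl ?_
      have hsub : S0 ⊆ K ∩ {x | -(0:ℝ) ≤ ⟪x, θ⟫} := by
        rintro x ⟨hxK, hx⟩; exact ⟨hxK, by simpa using hx.le⟩
      have hmono : c0 ≤ (volume (K ∩ {x | -(0:ℝ) ≤ ⟪x, θ⟫})).toReal := by
        apply ENNReal.toReal_mono (hvol_fin _ inter_subset_left)
        exact measure_mono hsub
      have hpow1 : (h / (h + 0)) ^ n = 1 := by
        rw [add_zero, div_self hhpos.ne']; simp
      rw [hpow1]
      calc 1 / e2 = (1 / (e2 * n)) * n := by field_simp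
        _ ≤ c0 * n := by
            apply mul_le_mul_of_nonneg_right hcase (by positivity)
        _ ≤ (volume (K ∩ {x | -(0:ℝ) ≤ ⟪x, θ⟫})).toReal * n :=
            mul_le_mul_of_nonneg_right hmono (by positivity)
        _ = (volume (K ∩ {x | -(0:ℝ) ≤ ⟪x, θ⟫})).toReal * 1 * n := by ring
    · -- Case B : small halfspace
      set δ : ℝ := 2 * h / (e2 * n) with hδ_def
      have hδpos : 0 < δ := by positivity
      -- integrability
      have intg : IntegrableOn g K volume := hg_cont.continuousOn.integrableOn_compact hK_comp
      have hgneg_cont : Continuous fun x : EuclideanSpace ℝ (Fin n) => max (-⟪x, θ⟫) 0 :=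
        (hinner_cont.neg).max continuous_const
      have intgneg : IntegrableOn (fun x => max (-⟪x, θ⟫) 0) K volume :=
        hgneg_cont.continuousOn.integrableOn_compact hK_comp
      set Iplus : ℝ := ∫ x in K, g x with hIplus_def
      set Iminus : ℝ := ∫ x in K, max (-⟪x, θ⟫) 0 with hIminus_def
      -- centering
      have hcen0 : ∫ x in K, ⟪x, θ⟫ = 0 := by
        have h1 : ∫ x in K, ⟪θ, x⟫ = ⟪θ, ∫ x in K, x⟫ := integral_inner hid_int θ
        rw [hK_cen, inner_zero_right] at h1
        rw [← h1]
        congr 1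
        funext x
        exact (real_inner_comm x θ).symm
      have hpm : Iplus = Iminus := by
        have h1 : ∫ x in K, (g x - max (-⟪x, θ⟫) 0) = Iplus - Iminus :=
          integral_sub intg intgneg
        have h2 : ∀ x, g x - max (-⟪x, θ⟫) 0 = ⟪x, θ⟫ := fun x =>
          max_zero_sub_max_neg_zero_eq_self _
        rw [show (fun x => g x - max (-⟪x, θ⟫) 0) = fun x => ⟪x, θ⟫ from funext h2] at h1
        rw [hcen0] at h1
        linarith
      -- Iplus ≤ h * c0
      have hIplus_le : Iplus ≤ h * c0 := by
        set ind : EuclideanSpace ℝ (Fin n) → ℝ :=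
          ({x : EuclideanSpace ℝ (Fin n) | 0 < ⟪x, θ⟫}).indicator (fun _ => (1:ℝ)) with hind_def
        have hind_int : Integrable ind (volume.restrict K) :=
          (integrable_const (1:ℝ)).indicator hS0m
        have h1 : Iplus ≤ ∫ x in K, h * ind x := by
          refine setIntegral_mono_on intg (hind_int.const_mul h) hKm fun x hx => ?_
          by_cases hpos : 0 < ⟪x, θ⟫
          · have hind1 : ind x = 1 := by
              simp only [hind_def]
              exact Set.indicator_of_mem (by exact hpos) _
            rw [hind1, mul_one]
            exact max_le (hbd x hx) hh0
          · have hind0 : ind x = 0 := by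
              simp only [hind_def]
              exact Set.indicator_of_notMem (by exact hpos) _
            rw [hind0, mul_zero]
            push_neg at hpos
            exact max_le hpos le_rfl
        have h2 : ∫ x in K, h * ind x = h * c0 := by
          rw [integral_const_mul, hind_def, setIntegral_indicator hS0m]
          rw [integral_const]
          simp only [smul_eq_mul, mul_one, Measure.real, Measure.restrict_apply_univ, hc0_def, hS0_def,
            inter_comm]
        linarith
      -- Markov
      have hmar := mul_meas_ge_le_integral_of_nonneg
        (μ := volume.restrict K) (ae_of_all _ fun x => le_max_right (-⟪x, θ⟫) 0) intgneg δ
      have hsetm : (volume.restrict K) {x | δ ≤ max (-⟪x, θ⟫) 0}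
          = volume (K ∩ {x | ⟪x, θ⟫ ≤ -δ}) := by
        rw [Measure.restrict_apply (measurableSet_le measurable_const hgneg_cont.measurable)]
        have hseteq : {x : EuclideanSpace ℝ (Fin n) | δ ≤ max (-⟪x, θ⟫) 0}
            = {x : EuclideanSpace ℝ (Fin n) | ⟪x, θ⟫ ≤ -δ} := by
          ext x
          simp only [mem_setOf_eq]
          constructor
          · intro hx
            rcases le_max_iff.mp hx with h' | h'
            · linarith
            · linarith
          · intro hx
            exact le_max_iff.mpr (Or.inl (by linarith))
        rw [hseteq, inter_comm]
      rw [Measure.real, hsetm] at hmar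
      have hmB : (volume (K ∩ {x | ⟪x, θ⟫ ≤ -δ})).toReal ≤ Iminus / δ := by
        rw [le_div_iff₀ hδpos]
        linarith
      have hmB2 : Iminus / δ < 1 / 2 := by
        rw [← hpm]
        rw [div_lt_div_iff₀ hδpos (by norm_num : (0:ℝ) < 2)]
        have : Iplus ≤ h * c0 := hIplus_le
        have hc0' : c0 < 1 / (e2 * n) := hcase
        have h2 : h * c0 < h * (1 / (e2 * n)) :=
          mul_lt_mul_of_pos_left hc0' hhpos
        have h3 : h * (1 / (e2 * n)) * 2 = δ := by
          rw [hδ_def]; field_simp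
        nlinarith
      -- partition of measure
      have hcB : 1 / 2 ≤ (volume (K ∩ {x | -δ ≤ ⟪x, θ⟫})).toReal := by
        have hTm : MeasurableSet {x : EuclideanSpace ℝ (Fin n) | -δ ≤ ⟪x, θ⟫} :=
          measurableSet_le measurable_const hinner_cont.measurable
        have hpart := measure_inter_add_diff (μ := volume) K hTm
        rw [hK_vol] at hpart
        have hdiff_sub : K \ {x | -δ ≤ ⟪x, θ⟫} ⊆ K ∩ {x | ⟪x, θ⟫ ≤ -δ} := by
          rintro x ⟨hxK, hx⟩
          simp only [mem_setOf_eq, not_le] at hx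
          exact ⟨hxK, hx.le⟩
        have hfin1 := hvol_fin _ (inter_subset_left :
          K ∩ {x | -δ ≤ ⟪x, θ⟫} ⊆ K)
        have hfin2 := hvol_fin _ (diff_subset : K \ {x | -δ ≤ ⟪x, θ⟫} ⊆ K)
        have hfin3 := hvol_fin _ (inter_subset_left : K ∩ {x | ⟪x, θ⟫ ≤ -δ} ⊆ K)
        have htR := congrArg ENNReal.toReal hpart
        rw [ENNReal.toReal_add hfin1 hfin2] at htR
        simp only [ENNReal.toReal_one] at htR
        have hd_le : (volume (K \ {x | -δ ≤ ⟪x, θ⟫})).toReal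
            ≤ (volume (K ∩ {x | ⟪x, θ⟫ ≤ -δ})).toReal :=
          ENNReal.toReal_mono hfin3 (measure_mono hdiff_sub)
        linarith
      -- the side fact
      refine reduce δ hδpos.le ?_
      set a : ℝ := 2 / (e2 * n) with ha_def
      have hapos : 0 < a := by positivity
      have hδa : δ = h * a := by rw [hδ_def, ha_def]; ring
      have h1a_pos : (0:ℝ) < 1 + a := by linarith
      have hfrac : h / (h + δ) = 1 / (1 + a) := by
        rw [hδa, show h + h * a = h * (1 + a) by ring]
        rw [div_eq_div_iff (by positivity) h1a_pos.ne']
        ring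
      have hpow_ge : (1 / Real.exp (2 / e2)) ≤ (h / (h + δ)) ^ n := by
        rw [hfrac, div_pow, one_pow]
        rw [div_le_div_iff₀ (Real.exp_pos _) (by positivity)]
        have h1 : 1 + a ≤ Real.exp a := by
          have := Real.add_one_le_exp a; linarith
        have h2 : (1 + a) ^ n ≤ Real.exp a ^ n :=
          pow_le_pow_left₀ h1a_pos.le h1 n
        have h3 : Real.exp a ^ n = Real.exp (n * a) := (Real.exp_nat_mul a n).symm
        have h4 : (n:ℝ) * a = 2 / e2 * ((n:ℝ) / n) := by
          rw [ha_def]; field_simp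
        have h5 : (n:ℝ) / n = 1 := div_self hnne
        rw [h4, h5, mul_one] at h3
        rw [h3] at h2
        linarith
      -- numeric : 2 * exp (2/e2) ≤ e2
      have hnum : 2 * Real.exp (2 / e2) ≤ e2 := by
        have hexp13 : Real.exp (2 / e2) ≤ Real.exp (1/3) := by
          apply Real.exp_le_exp.mpr
          rw [div_le_div_iff₀ he2_pos (by norm_num : (0:ℝ) < 3)]
          linarith
        have hcube : Real.exp (1/3 : ℝ) ^ (3:ℕ) = Real.exp 1 := by
          rw [← Real.exp_nat_mul]; norm_num
        have hlt : Real.exp (1/3 : ℝ) < 1.4 := by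
          nlinarith [Real.exp_one_lt_d9, Real.exp_pos (1/3 : ℝ), hcube,
            sq_nonneg (Real.exp (1/3 : ℝ) - 1.4)]
        nlinarith
      have hcR_nn : (0:ℝ) ≤ (volume (K ∩ {x | -δ ≤ ⟪x, θ⟫})).toReal := ENNReal.toReal_nonneg
      calc 1 / e2 ≤ (1/2) * (1 / Real.exp (2 / e2)) * 1 := by
            rw [mul_one]
            rw [div_le_iff₀ he2_pos]
            rw [show 1/2 * (1 / Real.exp (2/e2)) * e2 = e2 / (2 * Real.exp (2/e2)) by
              field_simp]
            rw [le_div_iff₀ (by positivity)]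
            linarith [hnum]
        _ ≤ (volume (K ∩ {x | -δ ≤ ⟪x, θ⟫})).toReal * (h / (h + δ)) ^ n * n := by
            have e1 : (0:ℝ) ≤ 1 / Real.exp (2/e2) := by positivity
            have := mul_le_mul hcB hpow_ge e1 hcR_nn
            have h2 : (volume (K ∩ {x | -δ ≤ ⟪x, θ⟫})).toReal * (h / (h + δ)) ^ n * 1
                ≤ (volume (K ∩ {x | -δ ≤ ⟪x, θ⟫})).toReal * (h / (h + δ)) ^ n * n := by
              apply mul_le_mul_of_nonneg_left hnR
              positivity
            nlinarith
  -- convert to the rpow statement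
  show (2 / e2) ^ (1/q) *
      (Real.Gamma n * Real.Gamma (q + 1) / Real.Gamma ((n:ℝ) + q + 1)) ^ (1/q) * h
      ≤ (2 * I) ^ (1/q)
  have hC_pos : (0:ℝ) < Real.Gamma n * Real.Gamma (q + 1) / Real.Gamma ((n:ℝ) + q + 1) := by
    positivity
  have hrw : (2 / e2) ^ (1/q) *
      (Real.Gamma n * Real.Gamma (q + 1) / Real.Gamma ((n:ℝ) + q + 1)) ^ (1/q) * h
      = ((2 / e2) * (Real.Gamma n * Real.Gamma (q + 1) / Real.Gamma ((n:ℝ) + q + 1)) * h ^ q) ^ (1/q) := by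
    rw [Real.mul_rpow (by positivity) (Real.rpow_nonneg hh0 q),
      Real.mul_rpow (by positivity) (by positivity),
      ← Real.rpow_mul hh0, mul_one_div_cancel hqne, Real.rpow_one]
  rw [hrw]
  apply Real.rpow_le_rpow (by positivity) ?_ (by positivity)
  have h2 : 2 / e2 * (Real.Gamma n * Real.Gamma (q + 1) / Real.Gamma ((n:ℝ) + q + 1)) * h ^ q
      = 2 * (1 / e2 * (Real.Gamma n * Real.Gamma (q + 1) / Real.Gamma ((n:ℝ) + q + 1)) * h ^ q) := by
    ring
  rw [h2]
  linarith

end Main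
end

section
/- There exists an absolute constant c₁ > 0 such that for every n ≥ 1 and every centered convex body K of volume 1 in ℝⁿ, for every θ ∈ S^{n−1} one has h_{Z_n⁺(K)}(θ) ≥ c₁ h_K(θ); equivalently, Z_n⁺(K) ⊇ c₁ K. -/
open MeasureTheory
open scoped ENNReal Pointwise RealInnerProductSpace

/-- The one-sided L_q-centroid body Z_q⁺(K). -/
noncomputable def Zplus {n : ℕ} (K : Set (EuclideanSpace ℝ (Fin n))) (q : ℝ) :
    Set (EuclideanSpace ℝ (Fin n)) :=
  {z | ∀ y, ⟪z, y⟫ ≤ hZplus K q y}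

set_option maxHeartbeats 1000000 in
lemma key {n : ℕ} (hn : 1 ≤ n) (K : Set (EuclideanSpace ℝ (Fin n)))
    (hcomp : IsCompact K) (hconv : Convex ℝ K) (hint : (interior K).Nonempty)
    (hvol : volume K = 1) (hbar : (∫ x in K, x) = 0)
    (θ : EuclideanSpace ℝ (Fin n)) :
    (1/20 : ℝ) * suppFn K θ ≤ hZplus K (n : ℝ) θ := by
  have hn0 : (n : ℝ) ≠ 0 := by positivity
  have hconT : Continuous fun x : EuclideanSpace ℝ (Fin n) => ⟪x, θ⟫ :=
    continuous_id.inner continuous_const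
  obtain ⟨z, hz⟩ := hint
  have hKne : K.Nonempty := ⟨z, interior_subset hz⟩
  have hbdd : BddAbove ((fun x => ⟪x, θ⟫) '' K) :=
    (hcomp.image hconT).bddAbove
  set h : ℝ := suppFn K θ with hh
  have hle : ∀ x ∈ K, ⟪x, θ⟫ ≤ h := fun x hx =>
    le_csSup hbdd (Set.mem_image_of_mem _ hx)
  -- nonnegativity of hZplus
  have hInonneg : 0 ≤ ∫ x in K, max ⟪x, θ⟫ 0 ^ (n : ℝ) :=
    integral_nonneg fun x => Real.rpow_nonneg (le_max_right _ _) _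
  have hZnonneg : 0 ≤ hZplus K (n : ℝ) θ :=
    Real.rpow_nonneg (by linarith) _
  rcases le_or_gt h 0 with hneg | hpos
  · nlinarith
  -- maximizer
  obtain ⟨x₀, hx₀K, hx₀max⟩ := hcomp.exists_isMaxOn hKne hconT.continuousOn
  have hx₀ : ⟪x₀, θ⟫ = h := by
    refine le_antisymm (hle _ hx₀K) (csSup_le (hKne.image _) ?_)
    rintro a ⟨x, hx, rfl⟩; exact hx₀max hx
  have hKm : MeasurableSet K := hcomp.isClosed.measurableSet
  have hvolR : (volume K).toReal = 1 := by rw [hvol]; simp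
  -- integrability
  have hid : IntegrableOn (fun x : EuclideanSpace ℝ (Fin n) => x) K volume :=
    continuous_id.continuousOn.integrableOn_compact hcomp
  have hip : IntegrableOn (fun x => max ⟪x, θ⟫ 0) K volume :=
    (hconT.max continuous_const).continuousOn.integrableOn_compact hcomp
  have him : IntegrableOn (fun x => max (-⟪x, θ⟫) 0) K volume :=
    ((hconT.neg).max continuous_const).continuousOn.integrableOn_compact hcomp
  have hg : IntegrableOn (fun x => max ⟪x, θ⟫ 0 ^ n) K volume :=
    ((hconT.max continuous_const).pow n).continuousOn.integrableOn_compact hcomp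
  -- mean zero
  have hmean : ∫ x in K, ⟪x, θ⟫ = 0 := by
    have := integral_inner (𝕜 := ℝ) hid θ
    rw [hbar, inner_zero_right] at this
    have hcomm : (fun x : EuclideanSpace ℝ (Fin n) => (⟪x, θ⟫ : ℝ)) = fun x => ⟪θ, x⟫ := by
      funext x; exact real_inner_comm θ x
    rw [hcomm]; exact this
  have hsplit : ∫ x in K, max ⟪x, θ⟫ 0 = ∫ x in K, max (-⟪x, θ⟫) 0 := by
    have : ∫ x in K, (max ⟪x, θ⟫ 0 - max (-⟪x, θ⟫) 0) = 0 := by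
      have : (fun x : EuclideanSpace ℝ (Fin n) =>
          max ⟪x, θ⟫ 0 - max (-⟪x, θ⟫) 0) = fun x => ⟪x, θ⟫ := by
        funext x; rcases le_total (⟪x, θ⟫ : ℝ) 0 with hc | hc
        · rw [max_eq_right hc, max_eq_left (neg_nonneg.mpr hc)]; ring
        · rw [max_eq_left hc, max_eq_right (neg_nonpos.mpr hc)]; ring
      rw [this, hmean]
    rw [integral_sub hip him] at this
    linarith
  have hplush : ∫ x in K, max ⟪x, θ⟫ 0 ≤ h := by
    have := setIntegral_mono_on hip ((integrableOn_const_iff).2 (Or.inr (by simp [hvol])))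
      hKm (fun x hx => max_le (hle x hx) hpos.le)
    simpa [hvolR, Measure.real] using this
  -- Markov: the bad set B
  set B : Set (EuclideanSpace ℝ (Fin n)) := K ∩ {x | ⟪x, θ⟫ < -(4*h)} with hB
  have hBm : MeasurableSet B := hKm.inter (measurableSet_lt hconT.measurable measurable_const)
  have hBvol : (volume B).toReal ≤ 1/4 := by
    have hBK : B ⊆ K := Set.inter_subset_left
    have h1 : ∫ x in B, (4*h) ≤ ∫ x in B, max (-⟪x, θ⟫) 0 := by
      refine setIntegral_mono_on ((integrableOn_const_iff).2 (Or.inr ?_))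
        (him.mono_set hBK) hBm (fun x hx => ?_)
      · exact lt_of_le_of_lt (measure_mono hBK) (by simp [hvol])
      · have hxB : (⟪x, θ⟫ : ℝ) < -(4*h) := hx.2
        exact le_max_of_le_left (by linarith)
    have h2 : ∫ x in B, max (-⟪x, θ⟫) 0 ≤ ∫ x in K, max (-⟪x, θ⟫) 0 :=
      setIntegral_mono_set him (Filter.Eventually.of_forall fun x => le_max_right _ _)
        (HasSubset.Subset.eventuallyLE hBK)
    rw [setIntegral_const] at h1
    have hBfin : (volume B) ≤ 1 := le_trans (measure_mono hBK) (le_of_eq hvol)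
    have h3 : (volume B).toReal * (4*h) ≤ h := by
      calc (volume B).toReal * (4*h) = (volume B).toReal • (4*h) := rfl
        _ ≤ ∫ x in K, max (-⟪x, θ⟫) 0 := le_trans h1 h2
        _ = ∫ x in K, max ⟪x, θ⟫ 0 := hsplit.symm
        _ ≤ h := hplush
    nlinarith [ENNReal.toReal_nonneg (a := volume B)]
  -- the good slab A
  set A : Set (EuclideanSpace ℝ (Fin n)) := K ∩ {x | -(4*h) ≤ ⟪x, θ⟫} with hA
  have hAvol : (3/4 : ℝ) ≤ (volume A).toReal := by
    have hdisj : K \ {x | ⟪x, θ⟫ < -(4*h)} = A := by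
      ext x; simp [hA, Set.mem_diff, not_lt]
    have := measure_inter_add_diff K (measurableSet_lt hconT.measurable measurable_const)
      (μ := volume) (t := {x | ⟪x, θ⟫ < -(4*h)})
    rw [hdisj, hvol, ← hB] at this
    have hBne : volume B ≠ ⊤ := by
      exact ne_top_of_le_ne_top (by simp) (le_trans (measure_mono Set.inter_subset_left) (le_of_eq hvol))
    have hAne : volume A ≠ ⊤ := by
      exact ne_top_of_le_ne_top (by simp) (le_trans (measure_mono Set.inter_subset_left) (le_of_eq hvol))
    have := congrArg ENNReal.toReal this
    rw [ENNReal.toReal_add hBne hAne] at this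
    simp only [ENNReal.toReal_one] at this
    linarith
  -- the far slab A'
  set A' : Set (EuclideanSpace ℝ (Fin n)) := K ∩ {x | h/2 ≤ ⟪x, θ⟫} with hA'
  have hA'm : MeasurableSet A' := hKm.inter (measurableSet_le measurable_const hconT.measurable)
  have hhom : (AffineMap.homothety x₀ (1/10 : ℝ)) '' A ⊆ A' := by
    rintro _ ⟨x, hx, rfl⟩
    have hxK : x ∈ K := hx.1
    have hxt : -(4*h) ≤ ⟪x, θ⟫ := hx.2
    have heq : AffineMap.homothety x₀ (1/10 : ℝ) x
        = (9/10 : ℝ) • x₀ + (1/10 : ℝ) • x := by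
      simp only [AffineMap.homothety_apply, vsub_eq_sub, vadd_eq_add]
      module
    rw [heq]
    constructor
    · exact hconv hx₀K hxK (by norm_num) (by norm_num) (by norm_num)
    · have : ⟪(9/10 : ℝ) • x₀ + (1/10 : ℝ) • x, θ⟫
          = (9/10) * h + (1/10) * ⟪x, θ⟫ := by
        rw [inner_add_left, real_inner_smul_left, real_inner_smul_left, hx₀]
      simp only [Set.mem_setOf_eq, this]
      linarith
  have hA'vol : ((1/10 : ℝ))^n * (3/4 : ℝ) ≤ (volume A').toReal := by
    have h1 : volume (AffineMap.homothety x₀ (1/10 : ℝ) '' A)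
        = ENNReal.ofReal (|(1/10 : ℝ) ^ Module.finrank ℝ (EuclideanSpace ℝ (Fin n))|) * volume A :=
      Measure.addHaar_image_homothety _ _ _ _
    have hfr : Module.finrank ℝ (EuclideanSpace ℝ (Fin n)) = n := finrank_euclideanSpace_fin
    rw [hfr] at h1
    have h2 : ENNReal.ofReal (|(1/10 : ℝ) ^ n|) * volume A ≤ volume A' :=
      h1 ▸ measure_mono hhom
    have hA'ne : volume A' ≠ ⊤ :=
      ne_top_of_le_ne_top (by simp) (le_trans (measure_mono Set.inter_subset_left) (le_of_eq hvol))
    have hAne : volume A ≠ ⊤ :=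
      ne_top_of_le_ne_top (by simp) (le_trans (measure_mono Set.inter_subset_left) (le_of_eq hvol))
    have h3 := ENNReal.toReal_mono hA'ne h2
    rw [ENNReal.toReal_mul, ENNReal.toReal_ofReal (abs_nonneg _)] at h3
    have habs : |(1/10 : ℝ) ^ n| = (1/10 : ℝ)^n := abs_of_pos (by positivity)
    rw [habs] at h3
    nlinarith [pow_pos (show (0:ℝ) < 1/10 by norm_num) n]
  -- lower bound for the integral
  have hI : ((h/2)^n) * ((volume A').toReal) ≤ ∫ x in K, max ⟪x, θ⟫ 0 ^ n := by
    have h1 : ∫ x in A', ((h/2)^n : ℝ) ≤ ∫ x in A', max ⟪x, θ⟫ 0 ^ n := by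
      refine setIntegral_mono_on ((integrableOn_const_iff).2 (Or.inr ?_))
        (hg.mono_set Set.inter_subset_left) hA'm (fun x hx => ?_)
      · exact lt_of_le_of_lt (measure_mono Set.inter_subset_left) (by simp [hvol])
      · exact pow_le_pow_left₀ (by linarith) (le_max_of_le_left hx.2) n
    have h2 : ∫ x in A', max ⟪x, θ⟫ 0 ^ n ≤ ∫ x in K, max ⟪x, θ⟫ 0 ^ n :=
      setIntegral_mono_set hg (Filter.Eventually.of_forall fun x => by positivity)
        (HasSubset.Subset.eventuallyLE Set.inter_subset_left)
    rw [setIntegral_const, smul_eq_mul, mul_comm] at h1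
    change (h/2)^n * (volume A').toReal ≤ _ at h1
    linarith
  -- conclude
  have hrpow : ∫ x in K, max ⟪x, θ⟫ 0 ^ (n:ℝ) = ∫ x in K, max ⟪x, θ⟫ 0 ^ n := by
    congr 1; funext x; exact Real.rpow_natCast _ n
  have hfinal : ((h/20 : ℝ))^n ≤ 2 * ∫ x in K, max ⟪x, θ⟫ 0 ^ (n:ℝ) := by
    rw [hrpow]
    have ha : (0:ℝ) ≤ (h/2)^n := pow_nonneg (by linarith) n
    have hab : (0:ℝ) ≤ (h/2)^n * (1/10:ℝ)^n := mul_nonneg ha (by positivity)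
    calc ((h/20 : ℝ))^n = (h/2)^n * (1/10:ℝ)^n := by rw [← mul_pow]; congr 1; ring
      _ ≤ 2 * ((h/2)^n * ((1/10:ℝ)^n * (3/4))) := by
          have hring : 2 * ((h/2)^n * ((1/10:ℝ)^n * (3/4)))
              = (3/2) * ((h/2)^n * (1/10:ℝ)^n) := by ring
          rw [hring]; linarith
      _ ≤ 2 * ((h/2)^n * (volume A').toReal) := by
          have := mul_le_mul_of_nonneg_left hA'vol ha
          linarith
      _ ≤ 2 * ∫ x in K, max ⟪x, θ⟫ 0 ^ n := by linarith [hI]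
  have hZdef : hZplus K (n:ℝ) θ = (2 * ∫ x in K, max ⟪x, θ⟫ 0 ^ (n:ℝ)) ^ (1/(n:ℝ)) := rfl
  have hmono : (((h/20 : ℝ))^n) ^ (1/(n:ℝ)) ≤ hZplus K (n:ℝ) θ := by
    rw [hZdef]
    exact Real.rpow_le_rpow (by positivity) hfinal (by positivity)
  have hcollapse : (((h/20 : ℝ))^n) ^ (1/(n:ℝ)) = h/20 := by
    rw [← Real.rpow_natCast (h/20) n,
      ← Real.rpow_mul (show (0:ℝ) ≤ h/20 by linarith) (n:ℝ) (1/(n:ℝ)),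
      mul_one_div, div_self hn0, Real.rpow_one]
  rw [hcollapse] at hmono
  linarith

set_option maxHeartbeats 1000000 in
/-- There exists an absolute constant c₁ > 0 such that for every n ≥ 1 and
every centered convex body K of volume 1 in ℝⁿ, for every θ ∈ S^{n−1},
h_{Z_n⁺(K)}(θ) ≥ c₁ h_K(θ); equivalently Z_n⁺(K) ⊇ c₁ K. -/
theorem statement13 :
    ∃ c₁ : ℝ, 0 < c₁ ∧
      ∀ (n : ℕ), 1 ≤ n →
        ∀ K : Set (EuclideanSpace ℝ (Fin n)),
          IsCompact K → Convex ℝ K → (interior K).Nonempty →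
          volume K = 1 → (∫ x in K, x) = 0 →
          (∀ θ : EuclideanSpace ℝ (Fin n), ‖θ‖ = 1 →
              c₁ * suppFn K θ ≤ hZplus K (n : ℝ) θ) ∧
            c₁ • K ⊆ Zplus K (n : ℝ) := by
  refine ⟨1/20, by norm_num, ?_⟩
  intro n hn K hcomp hconv hint hvol hbar
  have hn0 : (n : ℝ) ≠ 0 := by positivity
  have hmain : ∀ θ, (1/20 : ℝ) * suppFn K θ ≤ hZplus K (n : ℝ) θ :=
    fun θ => key hn K hcomp hconv hint hvol hbar θ
  refine ⟨fun θ _ => hmain θ, ?_⟩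
  rintro _ ⟨z, hz, rfl⟩
  intro y
  by_cases hy : y = 0
  · subst hy
    have hlhs : (⟪(1/20 : ℝ) • z, (0 : EuclideanSpace ℝ (Fin n))⟫ : ℝ) = 0 :=
      inner_zero_right _
    have hrhs : hZplus K (n : ℝ) 0 = 0 := by
      unfold hZplus
      have hz0 : ∀ x : EuclideanSpace ℝ (Fin n),
          max (⟪x, (0 : EuclideanSpace ℝ (Fin n))⟫ : ℝ) 0 ^ (n : ℝ) = 0 := by
        intro x
        rw [inner_zero_right, max_self, Real.zero_rpow hn0]
      simp only [hz0, integral_zero, mul_zero]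
      exact Real.zero_rpow (by positivity)
    rw [hlhs, hrhs]
  · set r : ℝ := ‖y‖ with hrdef
    have hr : 0 < r := norm_pos_iff.mpr hy
    set θ : EuclideanSpace ℝ (Fin n) := r⁻¹ • y with hθdef
    have hyθ : y = r • θ := by
      rw [hθdef, smul_smul, mul_inv_cancel₀ (ne_of_gt hr), one_smul]
    have hInonneg : 0 ≤ ∫ x in K, max (⟪x, θ⟫ : ℝ) 0 ^ (n : ℝ) :=
      integral_nonneg fun x => Real.rpow_nonneg (le_max_right _ _) _
    -- homogeneity of hZplus
    have hsc : hZplus K (n : ℝ) y = r * hZplus K (n : ℝ) θ := by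
      unfold hZplus
      have hptw : ∀ x : EuclideanSpace ℝ (Fin n),
          max (⟪x, y⟫ : ℝ) 0 ^ (n : ℝ)
            = r ^ (n : ℝ) * (max (⟪x, θ⟫ : ℝ) 0 ^ (n : ℝ)) := by
        intro x
        rw [hyθ, real_inner_smul_right]
        have hmax : max (r * ⟪x, θ⟫) 0 = r * max (⟪x, θ⟫ : ℝ) 0 := by
          rw [mul_max_of_nonneg _ _ hr.le, mul_zero]
        rw [hmax, Real.mul_rpow hr.le (le_max_right _ _)]
      simp only [hptw]
      rw [integral_const_mul, show (2 : ℝ) * (r ^ (n:ℝ) * ∫ x in K, max (⟪x, θ⟫ : ℝ) 0 ^ (n : ℝ))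
            = r ^ (n:ℝ) * (2 * ∫ x in K, max (⟪x, θ⟫ : ℝ) 0 ^ (n : ℝ)) from by ring,
        Real.mul_rpow (Real.rpow_nonneg hr.le _) (by linarith),
        ← Real.rpow_mul hr.le (n:ℝ) (1/(n:ℝ)), mul_one_div, div_self hn0, Real.rpow_one]
    -- support function bound
    have hbdd : BddAbove ((fun x => (⟪x, θ⟫ : ℝ)) '' K) :=
      (hcomp.image (continuous_id.inner continuous_const)).bddAbove
    have hzs : (⟪z, θ⟫ : ℝ) ≤ suppFn K θ := le_csSup hbdd (Set.mem_image_of_mem _ hz)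
    have hlhs : (⟪(1/20 : ℝ) • z, y⟫ : ℝ) = (1/20) * (r * ⟪z, θ⟫) := by
      rw [real_inner_smul_left, hyθ, real_inner_smul_right]
    rw [hlhs, hsc]
    have h1 : (1/20 : ℝ) * (r * ⟪z, θ⟫) ≤ (1/20) * (r * suppFn K θ) := by
      have := mul_le_mul_of_nonneg_left hzs hr.le
      linarith
    have h2 : (1/20 : ℝ) * (r * suppFn K θ) ≤ r * hZplus K (n : ℝ) θ := by
      have := mul_le_mul_of_nonneg_left (hmain θ) hr.le
      linarith [this]
    linarith
end
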